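/- arXiv:1609.07295 — 6 statements merged into one kernel-verified Lean document; each statement's English description precedes it below -/
import Mathlib

section
/- Let D ⊂ ℤ be a nonempty finite set such that 0 ∈ D or D = -D (where -D = {-x : x ∈ D}). If P ∈ ℤ[X] divides some nonzero polynomial all of whose coefficients lie in D, then for every integer n > 1 the product P(X)·Φ_n(X), where Φ_n(X) is the n-th cyclotomic polynomial, also divides some nonzero polynomial all of whose coefficients lie in D. -/
/-!
If `Q` has all its coefficients in `D` and `deg Q < m`, then the coefficients of `Q · g(X^m)` are
the blocks `g_j · Q`, each padded to length `m`. So it suffices to find `m > deg Q` and `g` with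
`Φₙ ∣ g(X^m)` whose coefficients scale the first `m` coefficients of `Q` into `D`; with `ζ` a
primitive `n`-th root of unity this divisibility just says `g(ζ^m) = 0`. If `n ∤ m`, then
`ζ^m ≠ 1` is a root of `1 + X + ⋯ + X^(n-1)`; this handles `m = deg Q + 1` when `n ∤ deg Q + 1`,
and otherwise `m = deg Q + 2` when `0 ∈ D` (pad `Q` with a zero coefficient). In the remaining case
`D = -D`, `n ∣ m = deg Q + 1`, and `g = X - 1` works.
-/

open Polynomial

/-- `Q` is nonzero and all its coefficients of `X^0, ..., X^(deg Q)` lie in `D`. -/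
def HasCoeffsIn (D : Finset ℤ) (Q : Polynomial ℤ) : Prop :=
  Q ≠ 0 ∧ ∀ i ≤ Q.natDegree, Q.coeff i ∈ D

open Finset

namespace Polynomial

theorem coeff_mul_expand_of_natDegree_lt {R : Type*} [CommSemiring R] {p : R[X]} {m : ℕ}
    (hm : p.natDegree < m) (g : R[X]) (k : ℕ) :
    (p * expand R m g).coeff k = p.coeff (k % m) * g.coeff (k / m) := by
  have hm0 : 0 < m := by omega
  have hdiv : k - k % m = m * (k / m) := by have := Nat.mod_add_div k m; omega
  rw [coeff_mul, Nat.sum_antidiagonal_eq_sum_range_succ_mk,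
    sum_eq_single (k % m)]
  · rw [coeff_expand hm0, hdiv, if_pos (dvd_mul_right _ _), Nat.mul_div_cancel_left _ hm0]
  · intro i hik hi
    rw [coeff_expand hm0]
    by_cases hip : i ≤ p.natDegree
    · have hik : i ≤ k := Nat.lt_succ_iff.mp (mem_range.mp hik)
      rw [if_neg, mul_zero]
      intro hdvd
      have hmod : i % m = k % m := (Nat.modEq_iff_dvd' hik).mpr hdvd
      exact hi (by rwa [Nat.mod_eq_of_lt (by omega : i < m)] at hmod)
    · rw [coeff_eq_zero_of_natDegree_lt (by omega), zero_mul]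
  · intro h
    exact absurd (mem_range.mpr (Nat.lt_succ_of_le (Nat.mod_le k m))) h

theorem coeff_geom_sum_X_of_le_natDegree {R : Type*} [Semiring R] {n j : ℕ} (hn : 0 < n)
    (hj : j ≤ (∑ i ∈ range n, (X : R[X]) ^ i).natDegree) :
    (∑ i ∈ range n, (X : R[X]) ^ i).coeff j = 1 := by
  have hdeg : (∑ i ∈ range n, (X : R[X]) ^ i).natDegree ≤ n - 1 :=
    natDegree_sum_le_of_forall_le _ _ fun i hi ↦
      (natDegree_X_pow_le i).trans (by have := mem_range.mp hi; omega)
  simp only [finsetSum_coeff, coeff_X_pow, sum_ite_eq, mem_range]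
  rw [if_pos (by omega)]

end Polynomial

theorem IsPrimitiveRoot.cyclotomic_dvd_of_aeval_eq_zero {K : Type*} [Field K] [CharZero K]
    {μ : K} {n : ℕ} (hμ : IsPrimitiveRoot μ n) (hn : 0 < n) {f : ℤ[X]}
    (hf : aeval μ f = 0) : cyclotomic n ℤ ∣ f := by
  rw [cyclotomic_eq_minpoly hμ hn]
  exact minpoly.isIntegrallyClosed_dvd (hμ.isIntegral hn) hf

theorem IsPrimitiveRoot.geom_sum_pow_eq_zero {R : Type*} [CommRing R] [IsDomain R] {μ : R}
    {n m : ℕ} (hμ : IsPrimitiveRoot μ n) (hnm : ¬ n ∣ m) :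
    ∑ j ∈ range n, (μ ^ m) ^ j = 0 := by
  have hne : μ ^ m - 1 ≠ 0 := sub_ne_zero.mpr (mt (hμ.pow_eq_one_iff_dvd m).mp hnm)
  have hpow : (μ ^ m) ^ n = 1 := by rw [← pow_mul, mul_comm, pow_mul, hμ.pow_eq_one, one_pow]
  have := geom_sum_mul (μ ^ m) n
  rw [hpow, sub_self] at this
  exact (mul_eq_zero.mp this).resolve_right hne

theorem hasCoeffsIn_mul_expand {D : Finset ℤ} {Q g : ℤ[X]} {m : ℕ} (hQ : Q ≠ 0) (hg : g ≠ 0)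
    (hm : Q.natDegree < m) (hD : ∀ j ≤ g.natDegree, ∀ i < m, Q.coeff i * g.coeff j ∈ D) :
    HasCoeffsIn D (Q * expand ℤ m g) := by
  have hm0 : 0 < m := by omega
  have hg' : expand ℤ m g ≠ 0 := (expand_ne_zero hm0).mpr hg
  refine ⟨mul_ne_zero hQ hg', fun k hk ↦ ?_⟩
  rw [natDegree_mul hQ hg', natDegree_expand] at hk
  rw [coeff_mul_expand_of_natDegree_lt hm]
  refine hD _ (Nat.lt_succ_iff.mp ((Nat.div_lt_iff_lt_mul hm0).mpr ?_)) _ (Nat.mod_lt _ hm0)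
  rw [Nat.succ_mul]
  omega

theorem exists_hasCoeffsIn_mul_cyclotomic {D : Finset ℤ} {P Q g : ℤ[X]} {m n : ℕ} {μ : ℂ}
    (hμ : IsPrimitiveRoot μ n) (hn : 0 < n) (hQ : Q ≠ 0) (hPQ : P ∣ Q) (hg : g ≠ 0)
    (hm : Q.natDegree < m) (hD : ∀ j ≤ g.natDegree, ∀ i < m, Q.coeff i * g.coeff j ∈ D)
    (hroot : aeval (μ ^ m) g = 0) :
    ∃ Q' : ℤ[X], HasCoeffsIn D Q' ∧ P * cyclotomic n ℤ ∣ Q' :=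
  ⟨Q * expand ℤ m g, hasCoeffsIn_mul_expand hQ hg hm hD,
    mul_dvd_mul hPQ (hμ.cyclotomic_dvd_of_aeval_eq_zero hn (by rwa [expand_aeval]))⟩

theorem mul_cyclotomic_dvd_of_digit_multiple_general
    (D : Finset ℤ)
    (hD' : (0 : ℤ) ∈ D ∨ ∀ x : ℤ, x ∈ D ↔ -x ∈ D)
    (P : Polynomial ℤ)
    (hP : ∃ Q : Polynomial ℤ, HasCoeffsIn D Q ∧ P ∣ Q)
    (n : ℕ) (hn : 1 < n) :
    ∃ Q : Polynomial ℤ, HasCoeffsIn D Q ∧ P * Polynomial.cyclotomic n ℤ ∣ Q := by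
  obtain ⟨Q, ⟨hQ0, hQD⟩, hPQ⟩ := hP
  have hμ := Complex.isPrimitiveRoot_exp n (by omega)
  have of_not_dvd (m : ℕ) (hnm : ¬ n ∣ m) (hQm : Q.natDegree < m) (hmD : ∀ i < m, Q.coeff i ∈ D) :
      ∃ Q' : ℤ[X], HasCoeffsIn D Q' ∧ P * cyclotomic n ℤ ∣ Q' := by
    refine exists_hasCoeffsIn_mul_cyclotomic hμ (by omega) hQ0 hPQ
      (g := ∑ j ∈ range n, X ^ j) (monic_geom_sum_X (by omega)).ne_zero hQm
      (fun j hj i hi ↦ ?_) (by simpa using hμ.geom_sum_pow_eq_zero hnm)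
    rw [coeff_geom_sum_X_of_le_natDegree (by omega) hj, mul_one]
    exact hmD i hi
  by_cases hnd : n ∣ Q.natDegree + 1
  · rcases hD' with h0 | hneg
    · refine of_not_dvd (Q.natDegree + 2) (fun h ↦ ?_) (by omega) fun i hi ↦ ?_
      · have := Nat.dvd_one.mp ((Nat.dvd_add_right hnd).mp h)
        omega
      · rcases Nat.lt_succ_iff_lt_or_eq.mp hi with hi | rfl
        · exact hQD i (by omega)
        · rwa [coeff_eq_zero_of_natDegree_lt (by omega)]
    · refine exists_hasCoeffsIn_mul_cyclotomic hμ (by omega) hQ0 hPQ (g := X - C 1)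
        (m := Q.natDegree + 1) (X_sub_C_ne_zero 1) (by omega) (fun j hj i hi ↦ ?_) ?_
      · have hiD := hQD i (by omega)
        rw [natDegree_X_sub_C] at hj
        interval_cases j
        · simpa using (hneg _).mp hiD
        · simpa [coeff_one] using hiD
      · simp [(hμ.pow_eq_one_iff_dvd _).mpr hnd]
  · exact of_not_dvd _ hnd (by omega) fun i hi ↦ hQD i (by omega)

/-- Let `D ⊂ ℤ` be a nonempty finite digit set with `0 ∈ D` or `D = -D`. If `P`
divides a nonzero polynomial with all coefficients in `D`, then for every `n > 1`
so does `P · Φₙ`, where `Φₙ` is the `n`-th cyclotomic polynomial. -/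
theorem mul_cyclotomic_dvd_of_digit_multiple
    (D : Finset ℤ) (hD : D.Nonempty)
    (hD' : (0 : ℤ) ∈ D ∨ ∀ x : ℤ, x ∈ D ↔ -x ∈ D)
    (P : Polynomial ℤ)
    (hP : ∃ Q : Polynomial ℤ, HasCoeffsIn D Q ∧ P ∣ Q)
    (n : ℕ) (hn : 1 < n) :
    ∃ Q : Polynomial ℤ, HasCoeffsIn D Q ∧ P * Polynomial.cyclotomic n ℤ ∣ Q :=
  mul_cyclotomic_dvd_of_digit_multiple_general D hD' P hP n hn
end

section
/- Let D ⊂ ℤ be a nonempty finite set with D = -D (where -D = {-x : x ∈ D}). If P ∈ ℤ[X] divides some nonzero polynomial all of whose coefficients lie in D, then P(X)·(X - 1) also divides some nonzero polynomial all of whose coefficients lie in D. -/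
open Polynomial

/-- Let `D ⊂ ℤ` be a nonempty finite digit set with `D = -D`. If `P` divides a
nonzero polynomial with all coefficients in `D`, then so does `P · (X - 1)`. -/
theorem mul_X_sub_one_dvd_of_digit_multiple
    (D : Finset ℤ) (hD : D.Nonempty)
    (hD' : ∀ x : ℤ, x ∈ D ↔ -x ∈ D)
    (P : Polynomial ℤ)
    (hP : ∃ Q : Polynomial ℤ, HasCoeffsIn D Q ∧ P ∣ Q) :
    ∃ Q : Polynomial ℤ, HasCoeffsIn D Q ∧ P * (X - 1) ∣ Q := by
  obtain ⟨Q, ⟨hQ0, hQc⟩, hPQ⟩ := hP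
  set n := Q.natDegree with hn
  have h1 : (X ^ (n + 1) - 1 : Polynomial ℤ) ≠ 0 := by
    simpa using X_pow_sub_C_ne_zero (Nat.succ_pos n) (1 : ℤ)
  have hdeg1 : (X ^ (n + 1) - 1 : Polynomial ℤ).natDegree = n + 1 := by
    simpa using (natDegree_X_pow_sub_C (n := n + 1) (r := (1 : ℤ)))
  have hdeg : (Q * (X ^ (n + 1) - 1)).natDegree = n + (n + 1) := by
    rw [natDegree_mul hQ0 h1, hdeg1]
  have hcoeff : ∀ i, (Q * (X ^ (n + 1) - 1)).coeff i =
      (if n + 1 ≤ i then Q.coeff (i - (n + 1)) else 0) - Q.coeff i := by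
    intro i
    rw [mul_sub, mul_one, coeff_sub, coeff_mul_X_pow']
  refine ⟨Q * (X ^ (n + 1) - 1), ⟨mul_ne_zero hQ0 h1, ?_⟩, ?_⟩
  · intro i hi
    rw [hcoeff]
    by_cases h : n + 1 ≤ i
    · have hiz : Q.coeff i = 0 :=
        coeff_eq_zero_of_natDegree_lt (by omega)
      rw [if_pos h, hiz, sub_zero]
      exact hQc _ (by rw [hdeg] at hi; omega)
    · rw [if_neg h, zero_sub]
      exact (hD' _).mp (hQc i (by omega))
  · refine mul_dvd_mul hPQ ?_
    simpa using sub_dvd_pow_sub_pow (X : Polynomial ℤ) 1 (n + 1)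
end

section
/- Let Q(X) = a_d X^d + a_{d-1} X^{d-1} + ⋯ + a_1 X + a_0 ∈ ℂ[X] be a polynomial of degree d ≥ 1, and suppose z ∈ ℂ is a root of Q of multiplicity m ≥ 1 with |z| ≠ 1. Fix j ∈ {1,...,d} and set R(X) = a_d X^j + a_{d-1} X^{j-1} + ⋯ + a_{d-j}. Then for each k ∈ {0,1,...,m-1}, the k-th derivative of R satisfies |R^{(k)}(z)| ≤ k! · H(Q) / | |z| - 1 |^{k+1}, where H(Q) = max{|a_d|, |a_{d-1}|, ..., |a_0|} is the height of Q. -/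
/-!
For `‖z‖ < 1` the bound is termwise: the coefficients of `R^{(k)}` are
`k! * C(i + k, k) * a_{d-j+i+k}`, and `∑ C(i + k, k) r ^ i ≤ (1 - r)^{-(k+1)}` for `0 ≤ r < 1`.

For `‖z‖ > 1` put `e = d - j` and `S = a_{e-1} X^{e-1} + ⋯ + a_0`, so that `X^e R = Q - S`.
Then `R = Q / X^e - S / X^e`, and as `z` is a root of `Q` of multiplicity `> k`, the `k`-th
derivative of `Q / X^e` vanishes at `z`. So `R^{(k)}(z) = -(S / X^e)^{(k)}(z)`, and the term of
`a_{e-1-s}` in it has size at most `H(Q) * k! * C(s + k, k) * ‖z‖^{-(s+k+1)}`: the same binomial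
series, now in `1 / ‖z‖`.
-/

open Polynomial Finset
open scoped Nat

theorem sum_range_choose_add_mul_pow_le (k N : ℕ) {u : ℝ} (hu0 : 0 ≤ u) (hu1 : u < 1) :
    ∑ s ∈ range N, ((s + k).choose k : ℝ) * u ^ s ≤ 1 / (1 - u) ^ (k + 1) :=
  sum_le_hasSum _ (fun _ _ => by positivity)
    (hasSum_choose_mul_geometric_of_norm_lt_one k (by rwa [Real.norm_of_nonneg hu0]))

theorem norm_eval_iterate_derivative_le_of_norm_lt_one {𝕜 : Type*} [NormedField 𝕜]
    {P : 𝕜[X]} {H : ℝ} (hP : ∀ i, ‖P.coeff i‖ ≤ H) {z : 𝕜} (hz : ‖z‖ < 1) (k : ℕ) :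
    ‖(derivative^[k] P).eval z‖ ≤ k ! * H / (1 - ‖z‖) ^ (k + 1) := by
  have hH : 0 ≤ H := (norm_nonneg _).trans (hP 0)
  have hdeg : (derivative^[k] P).natDegree < P.natDegree + 1 :=
    (natDegree_iterate_derivative P k).trans_lt (by omega)
  calc ‖(derivative^[k] P).eval z‖
      ≤ ∑ i ∈ range (P.natDegree + 1), ‖(derivative^[k] P).coeff i * z ^ i‖ := by
        rw [eval_eq_sum_range' hdeg]
        exact norm_sum_le _ _
    _ ≤ ∑ i ∈ range (P.natDegree + 1), k ! * H * (((i + k).choose k : ℝ) * ‖z‖ ^ i) := by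
        gcongr with i
        rw [coeff_iterate_derivative, norm_mul, norm_pow]
        calc ‖(i + k).descFactorial k • P.coeff (i + k)‖ * ‖z‖ ^ i
            ≤ (i + k).descFactorial k * H * ‖z‖ ^ i := by
              gcongr
              exact (norm_nsmul_le ..).trans (by gcongr; exact hP _)
          _ = _ := by
              rw [Nat.descFactorial_eq_factorial_mul_choose]
              push_cast
              ring
    _ ≤ k ! * H * (1 / (1 - ‖z‖) ^ (k + 1)) := by
        rw [← mul_sum]
        gcongr
        exact sum_range_choose_add_mul_pow_le _ _ (norm_nonneg z) hz
    _ = _ := by ring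

section EulerIterate

variable {A : Type*} [CommRing A]

theorem X_mul_derivative_X_pow (n : ℕ) : X * derivative (X ^ n : A[X]) = (n : A[X]) * X ^ n := by
  rw [derivative_X_pow, C_eq_natCast]
  rcases n with _ | n
  · simp
  · rw [Nat.add_sub_cancel, pow_succ]
    ring

/-- `eulerIterate e p k = X ^ (e + k) * (p / X ^ e)^{(k)}`, computed inside `A[X]`. -/
noncomputable def eulerIterate (e : ℕ) (p : A[X]) : ℕ → A[X]
  | 0 => p
  | k + 1 => X * derivative (eulerIterate e p k) - ((e + k : ℕ) : A[X]) * eulerIterate e p k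

theorem X_pow_add_mul_iterate_derivative (e k : ℕ) (p : A[X]) :
    X ^ (e + k) * derivative^[k] p = eulerIterate e (X ^ e * p) k := by
  induction k with
  | zero => simp [eulerIterate]
  | succ k ih =>
    rw [eulerIterate, ← ih, Function.iterate_succ_apply', derivative_mul, mul_add,
      ← mul_assoc, X_mul_derivative_X_pow]
    ring

theorem eulerIterate_sub (e : ℕ) (p q : A[X]) (k : ℕ) :
    eulerIterate e (p - q) k = eulerIterate e p k - eulerIterate e q k := by
  induction k with
  | zero => rfl
  | succ k ih =>
    simp only [eulerIterate, ih, derivative_sub]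
    ring

theorem eulerIterate_sum {ι : Type*} (s : Finset ι) (e : ℕ) (p : ι → A[X]) (k : ℕ) :
    eulerIterate e (∑ i ∈ s, p i) k = ∑ i ∈ s, eulerIterate e (p i) k := by
  induction k with
  | zero => rfl
  | succ k ih =>
    simp only [eulerIterate, ih, derivative_sum, mul_sum, ← sum_sub_distrib]

theorem eulerIterate_C_mul_X_pow (e : ℕ) (a : A) (i k : ℕ) :
    eulerIterate e (C a * X ^ i) k = C (a * ∏ l ∈ range k, ((i : A) - e - l)) * X ^ i := by
  induction k with
  | zero => simp [eulerIterate]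
  | succ k ih =>
    rw [eulerIterate, ih, derivative_C_mul, mul_left_comm, X_mul_derivative_X_pow,
      prod_range_succ]
    simp only [map_mul, map_sub, map_natCast, Nat.cast_add]
    ring

theorem pow_dvd_eulerIterate {q p : A[X]} {n : ℕ} (e k : ℕ) (h : q ^ (n + k) ∣ p) :
    q ^ n ∣ eulerIterate e p k := by
  induction k generalizing n with
  | zero => exact h
  | succ k ih =>
    have h' : q ^ (n + 1) ∣ eulerIterate e p k :=
      ih (by rwa [show n + 1 + k = n + (k + 1) by omega])
    exact dvd_sub (by simpa using (pow_sub_one_dvd_derivative_of_pow_dvd h').mul_left X)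
      (((pow_dvd_pow q n.le_succ).trans h').mul_left _)


theorem prod_range_natCast_sub_sub (i e k : ℕ) (hi : i < e) :
    ∏ l ∈ range k, ((i : A) - e - l) = (-1) ^ k * ((e - i).ascFactorial k : ℕ) := by
  rw [Nat.ascFactorial_eq_prod_range, Nat.cast_prod, ← card_range k, ← prod_const,
    card_range, ← prod_mul_distrib]
  refine prod_congr rfl fun l _ => ?_
  push_cast [Nat.cast_sub hi.le]
  ring

end EulerIterate

theorem norm_eval_eulerIterate_le {𝕜 : Type*} [NormedField 𝕜] {a : ℕ → 𝕜} {H : ℝ}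
    (ha : ∀ i, ‖a i‖ ≤ H) {z : 𝕜} (hz : 1 < ‖z‖) (e k : ℕ) :
    ‖(eulerIterate e (∑ i ∈ range e, C (a i) * X ^ i) k).eval z‖ ≤
      k ! * H * ‖z‖ ^ (e + k) / (‖z‖ - 1) ^ (k + 1) := by
  have hH : 0 ≤ H := (norm_nonneg _).trans (ha 0)
  set v := ‖z‖
  have hu : v⁻¹ < 1 := inv_lt_one_of_one_lt₀ hz
  have hterm : ∀ s ∈ range e, ‖(eulerIterate e (C (a (e - 1 - s)) * X ^ (e - 1 - s)) k).eval z‖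
      ≤ k ! * H * v ^ (e + k) * v⁻¹ ^ (k + 1) * ((s + k).choose k * v⁻¹ ^ s) := by
    intro s hs
    rw [mem_range] at hs
    rw [eulerIterate_C_mul_X_pow, eval_C_mul, eval_X_pow,
      prod_range_natCast_sub_sub _ _ _ (by omega), show e - (e - 1 - s) = s + 1 by omega,
      Nat.ascFactorial_eq_factorial_mul_choose, norm_mul, norm_mul, norm_mul, norm_pow, norm_pow,
      norm_neg, norm_one, one_pow, one_mul]
    have hcast : ‖((k ! * (s + k).choose k : ℕ) : 𝕜)‖ ≤ k ! * (s + k).choose k := by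
      simpa using Nat.norm_cast_le (α := 𝕜) (k ! * (s + k).choose k)
    have hpow : v ^ (e - 1 - s) = v ^ (e + k) * v⁻¹ ^ (k + 1) * v⁻¹ ^ s := by
      rw [inv_pow, inv_pow, mul_assoc, ← mul_inv, ← pow_add, ← div_eq_mul_inv,
        eq_div_iff (by positivity), ← pow_add]
      congr 1
      omega
    calc ‖a (e - 1 - s)‖ * ‖((k ! * (s + k).choose k : ℕ) : 𝕜)‖ * v ^ (e - 1 - s)
        ≤ H * (k ! * (s + k).choose k) * v ^ (e - 1 - s) := by gcongr; exact ha _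
      _ = _ := by rw [hpow]; ring
  calc ‖(eulerIterate e (∑ i ∈ range e, C (a i) * X ^ i) k).eval z‖
      ≤ ∑ s ∈ range e, k ! * H * v ^ (e + k) * v⁻¹ ^ (k + 1) * ((s + k).choose k * v⁻¹ ^ s) := by
        rw [eulerIterate_sum, eval_finsetSum, ← sum_range_reflect]
        exact (norm_sum_le _ _).trans (sum_le_sum hterm)
    _ ≤ k ! * H * v ^ (e + k) * v⁻¹ ^ (k + 1) * (1 / (1 - v⁻¹) ^ (k + 1)) := by
        rw [← mul_sum]
        gcongr
        exact sum_range_choose_add_mul_pow_le _ _ (by positivity) hu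
    _ = k ! * H * v ^ (e + k) * (v⁻¹ / (1 - v⁻¹)) ^ (k + 1) := by
        rw [div_pow, mul_one_div, mul_div_assoc]
    _ = k ! * H * v ^ (e + k) / (v - 1) ^ (k + 1) := by
        have : v⁻¹ / (1 - v⁻¹) = (v - 1)⁻¹ := by
          have : v - 1 ≠ 0 := by linarith
          field_simp
        rw [this, inv_pow, div_eq_mul_inv]

theorem norm_eval_iterate_derivative_le_of_one_lt_norm {𝕜 : Type*} [NormedField 𝕜]
    {Q R : 𝕜[X]} {H : ℝ} (hQ : ∀ i, ‖Q.coeff i‖ ≤ H) {e : ℕ}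
    (hsplit : X ^ e * R = Q - ∑ i ∈ range e, C (Q.coeff i) * X ^ i)
    {z : 𝕜} (hz : 1 < ‖z‖) {k : ℕ} (hdvd : (X - C z) ^ (k + 1) ∣ Q) :
    ‖(derivative^[k] R).eval z‖ ≤ k ! * H / (‖z‖ - 1) ^ (k + 1) := by
  have hQk : (eulerIterate e Q k).eval z = 0 := by
    rw [← IsRoot, ← dvd_iff_isRoot, ← pow_one (X - C z)]
    exact pow_dvd_eulerIterate e k (by rwa [add_comm])
  have hRS : (X ^ (e + k) * derivative^[k] R).eval z =
      -(eulerIterate e (∑ i ∈ range e, C (Q.coeff i) * X ^ i) k).eval z := by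
    rw [X_pow_add_mul_iterate_derivative, hsplit, eulerIterate_sub, eval_sub, hQk, zero_sub]
  have hS := norm_eval_eulerIterate_le hQ hz e k
  rw [← norm_neg, ← hRS, eval_mul, eval_pow, eval_X, norm_mul, norm_pow] at hS
  refine le_of_mul_le_mul_left (hS.trans_eq ?_) (by positivity : 0 < ‖z‖ ^ (e + k))
  ring

theorem X_pow_mul_sum_add_sum_eq {A : Type*} [Semiring A] (p : A[X]) (e n : ℕ)
    (hp : p.natDegree ≤ e + n) :
    X ^ e * ∑ i ∈ range (n + 1), C (p.coeff (e + i)) * X ^ i +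
      ∑ i ∈ range e, C (p.coeff i) * X ^ i = p := by
  conv_rhs => rw [p.as_sum_range_C_mul_X_pow' (n := e + (n + 1)) (by omega), sum_range_add]
  rw [add_comm, mul_sum]
  congr 1
  refine sum_congr rfl fun i _ => ?_
  rw [pow_add, ← mul_assoc, X_pow_mul, mul_assoc]

theorem norm_coeff_sum_C_mul_X_pow_le {𝕜 : Type*} [NormedField 𝕜] {a : ℕ → 𝕜} {H : ℝ}
    (ha : ∀ i, ‖a i‖ ≤ H) (s : Finset ℕ) (n : ℕ) :
    ‖(∑ i ∈ s, C (a i) * X ^ i).coeff n‖ ≤ H := by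
  simp only [finsetSum_coeff, coeff_C_mul_X_pow, sum_ite_eq]
  split_ifs
  · exact ha n
  · simpa using (norm_nonneg _).trans (ha 0)

theorem norm_coeff_le_sup' {𝕜 : Type*} [NormedField 𝕜] {p : 𝕜[X]} {d : ℕ}
    (hp : p.natDegree ≤ d) (i : ℕ) :
    ‖p.coeff i‖ ≤ (range (d + 1)).sup' nonempty_range_add_one fun i => ‖p.coeff i‖ := by
  by_cases hi : i ≤ d
  · exact le_sup' (fun i => ‖p.coeff i‖) (mem_range.mpr (by omega))
  · rw [coeff_eq_zero_of_natDegree_lt (by omega), norm_zero]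
    exact (norm_nonneg _).trans (le_sup' (fun i => ‖p.coeff i‖) (mem_range.mpr d.succ_pos))

theorem deriv_bound_at_root_general
    (Q : Polynomial ℂ) (d : ℕ) (hdeg : Q.natDegree = d)
    (z : ℂ) (hz : ‖z‖ ≠ 1)
    (m : ℕ) (hmult : Q.rootMultiplicity z = m)
    (j : ℕ)
    (R : Polynomial ℂ)
    (hR : R = ∑ i ∈ Finset.range (j + 1), Polynomial.C (Q.coeff (d - j + i)) * X ^ i)
    (k : ℕ) (hk : k < m) :
    ‖((⇑Polynomial.derivative)^[k] R).eval z‖ ≤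
      (k.factorial : ℝ) *
          ((Finset.range (d + 1)).sup' (Finset.nonempty_range_add_one)
            fun i => ‖Q.coeff i‖) /
        |‖z‖ - 1| ^ (k + 1) := by
  set H := (range (d + 1)).sup' nonempty_range_add_one fun i => ‖Q.coeff i‖
  have hQ : ∀ i, ‖Q.coeff i‖ ≤ H := norm_coeff_le_sup' hdeg.le
  rcases hz.lt_or_gt with hz1 | hz1
  · rw [abs_of_neg (by linarith), neg_sub]
    exact norm_eval_iterate_derivative_le_of_norm_lt_one
      (hR ▸ norm_coeff_sum_C_mul_X_pow_le (fun i => hQ _) _) hz1 k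
  · have hsplit : X ^ (d - j) * R = Q - ∑ i ∈ range (d - j), C (Q.coeff i) * X ^ i := by
      rw [hR, eq_sub_iff_add_eq]
      exact X_pow_mul_sum_add_sum_eq Q _ j (by omega)
    rw [abs_of_pos (by linarith)]
    exact norm_eval_iterate_derivative_le_of_one_lt_norm hQ hsplit hz1
      ((pow_dvd_pow _ hk).trans (hmult ▸ pow_rootMultiplicity_dvd Q z))

/-- Lemma: if `z`, with `|z| ≠ 1`, is a root of multiplicity `m ≥ 1` of
`Q(X) = a_d X^d + ⋯ + a_0` of degree `d ≥ 1`, `1 ≤ j ≤ d`, and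
`R(X) = a_d X^j + a_{d-1} X^{j-1} + ⋯ + a_{d-j}`, then for every `k < m` one has
`|R^{(k)}(z)| ≤ k! · H(Q) / ||z| - 1|^{k+1}`, where `H(Q)` is the height of `Q`. -/
theorem deriv_bound_at_root
    (Q : Polynomial ℂ) (d : ℕ) (hd : 1 ≤ d) (hdeg : Q.natDegree = d)
    (z : ℂ) (hz : ‖z‖ ≠ 1)
    (m : ℕ) (hm : 1 ≤ m) (hmult : Q.rootMultiplicity z = m)
    (j : ℕ) (hj1 : 1 ≤ j) (hjd : j ≤ d)
    (R : Polynomial ℂ)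
    (hR : R = ∑ i ∈ Finset.range (j + 1), Polynomial.C (Q.coeff (d - j + i)) * X ^ i)
    (k : ℕ) (hk : k < m) :
    ‖((⇑Polynomial.derivative)^[k] R).eval z‖ ≤
      (k.factorial : ℝ) *
          ((Finset.range (d + 1)).sup' (Finset.nonempty_range_add_one)
            fun i => ‖Q.coeff i‖) /
        |‖z‖ - 1| ^ (k + 1) :=
  deriv_bound_at_root_general Q d hdeg z hz m hmult j R hR k hk
end

section
/- Let P ∈ ℤ[X] be a nonconstant polynomial with no roots on the complex unit circle |z| = 1, and let B > 0 be a real number. Then the set Rem(P, B) of all polynomials R ∈ ℤ[X] with deg R < deg P such that for every complex root α of P of multiplicity e and every k ∈ {0,1,...,e-1} one has |R^{(k)}(α)| ≤ k! · B / | |α| - 1 |^{k+1}, is a finite set. -/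
open Polynomial

/-- `Rem P B`: the set of integer polynomials `R` with `deg R < deg P` such that
for every complex root `α` of `P` of multiplicity `e` and every `k < e` one has
`|R^{(k)}(α)| ≤ k! · B / ||α| - 1|^{k+1}`. -/
def Rem (P : Polynomial ℤ) (B : ℝ) : Set (Polynomial ℤ) :=
  {R | R.degree < P.degree ∧
    ∀ α : ℂ, (P.map (Int.castRingHom ℂ)).IsRoot α →
      ∀ k < (P.map (Int.castRingHom ℂ)).rootMultiplicity α,
        ‖(((⇑Polynomial.derivative)^[k] (R.map (Int.castRingHom ℂ))).eval α)‖ ≤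
          (k.factorial : ℝ) * B / |‖α‖ - 1| ^ (k + 1)}

/-!
Let `n = deg P`. Recording, at every root `α` of `P`, the derivatives of order below the
multiplicity of `α` is a `ℂ`-linear map on polynomials of degree `< n`, and it is injective: a
polynomial in its kernel has every root of `P` as a root of at least the same multiplicity, hence
at least `n` roots counted with multiplicity. On an `n`-dimensional space an injective linear map
is antilipschitz, so bounding every jet, as the definition of `Rem P B` does, bounds the
coefficients. Bounded sets of integer coefficient vectors are finite.
-/

theorem LinearMap.finite_setOf_apply_intCast_mem {ι E : Type*} [Fintype ι] [NormedAddCommGroup E]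
    [NormedSpace ℂ E] {Φ : (ι → ℂ) →ₗ[ℂ] E} (hΦ : Function.Injective Φ) {S : Set E}
    (hS : Bornology.IsBounded S) : {c : ι → ℤ | Φ ((↑) ∘ c) ∈ S}.Finite := by
  obtain ⟨K, -, hK⟩ := Φ.injective_iff_antilipschitz.mp hΦ
  have hbdd : Bornology.IsBounded {c : ι → ℤ | Φ ((↑) ∘ c) ∈ S} :=
    (hK.comp Complex.isometry_intCast.postcomp_pi.antilipschitz).isBounded_preimage hS
  simpa using Metric.finite_isBounded_inter_isClosed DiscreteTopology.isDiscrete hbdd isClosed_univ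

namespace Polynomial

section RootJets

variable {K : Type*} [Field K]

theorem roots_le_roots_of_iterate_derivative_eval_eq_zero [CharZero K] {P Q : K[X]} (hP : P ≠ 0)
    (hQ : Q ≠ 0)
    (h : ∀ α, P.IsRoot α → ∀ k < P.rootMultiplicity α, (derivative^[k] Q).eval α = 0) :
    P.roots ≤ Q.roots := by
  classical
  refine Multiset.le_iff_count.mpr fun α => ?_
  rw [count_roots, count_roots]
  rcases Nat.eq_zero_or_pos (P.rootMultiplicity α) with h0 | hpos
  · simp [h0]
  have hroot : P.IsRoot α := (rootMultiplicity_pos hP).mp hpos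
  have := lt_rootMultiplicity_of_isRoot_iterate_derivative (n := P.rootMultiplicity α - 1) hQ
    fun m hm => h α hroot m (by omega)
  omega

theorem eq_zero_of_iterate_derivative_eval_eq_zero [CharZero K] [IsAlgClosed K] {P Q : K[X]}
    (hP : P ≠ 0) (hdeg : Q.degree < P.degree)
    (h : ∀ α, P.IsRoot α → ∀ k < P.rootMultiplicity α, (derivative^[k] Q).eval α = 0) :
    Q = 0 := by
  by_contra hQ
  have hcard := Multiset.card_le_card (roots_le_roots_of_iterate_derivative_eval_eq_zero hP hQ h)
  rw [splits_iff_card_roots.mp (IsAlgClosed.splits P)] at hcard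
  have := natDegree_lt_natDegree hQ hdeg
  have := card_roots' Q
  omega

variable [DecidableEq K]

noncomputable def rootJets (P : K[X]) :
    K[X] →ₗ[K] (Σ α : P.roots.toFinset, Fin (P.rootMultiplicity (α : K))) → K :=
  LinearMap.pi fun i => (leval (i.1 : K)).comp (derivative ^ (i.2 : ℕ))

theorem rootJets_apply (P Q : K[X])
    (i : Σ α : P.roots.toFinset, Fin (P.rootMultiplicity (α : K))) :
    rootJets P Q i = (derivative^[i.2] Q).eval (i.1 : K) := by
  simp [rootJets, Module.End.pow_apply]

theorem injective_rootJets_comp_degreeLT [CharZero K] [IsAlgClosed K] {P : K[X]} (hP : P ≠ 0) :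
    Function.Injective (rootJets P ∘ₗ (degreeLT K P.natDegree).subtype) := by
  rw [← LinearMap.ker_eq_bot, LinearMap.ker_eq_bot']
  rintro ⟨Q, hQ⟩ hjets
  refine Subtype.ext (eq_zero_of_iterate_derivative_eval_eq_zero hP ?_ fun α hα k hk => ?_)
  · rw [degree_eq_natDegree hP]
    exact mem_degreeLT.mp hQ
  · have hmem : α ∈ P.roots.toFinset := Multiset.mem_toFinset.mpr ((mem_roots hP).mpr hα)
    simpa [rootJets_apply] using congrFun hjets ⟨⟨α, hmem⟩, ⟨k, hk⟩⟩

end RootJets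

theorem degreeLTEquiv_symm_comp_map {R S : Type*} [CommRing R] [CommRing S] (f : R →+* S)
    {n : ℕ} {p : R[X]} (hp : p ∈ degreeLT R n) :
    ((degreeLTEquiv S n).symm (f ∘ degreeLTEquiv R n ⟨p, hp⟩) : S[X]) = p.map f := by
  have hmap : p.map f ∈ degreeLT S n :=
    mem_degreeLT.mpr (degree_map_le.trans_lt (mem_degreeLT.mp hp))
  have hcoeff : f ∘ degreeLTEquiv R n ⟨p, hp⟩ = degreeLTEquiv S n ⟨p.map f, hmap⟩ := by
    ext i
    simp [degreeLTEquiv]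
  rw [hcoeff, LinearEquiv.symm_apply_apply]

theorem finite_setOf_degree_lt_map_intCast_mem {E : Type*} [NormedAddCommGroup E]
    [NormedSpace ℂ E] {n : ℕ} {Φ : ℂ[X] →ₗ[ℂ] E}
    (hΦ : Function.Injective (Φ ∘ₗ (degreeLT ℂ n).subtype)) {S : Set E}
    (hS : Bornology.IsBounded S) :
    {R : ℤ[X] | R.degree < n ∧ Φ (R.map (Int.castRingHom ℂ)) ∈ S}.Finite := by
  have hfin := LinearMap.finite_setOf_apply_intCast_mem
    (Φ := Φ ∘ₗ (degreeLT ℂ n).subtype ∘ₗ (degreeLTEquiv ℂ n).symm.toLinearMap)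
    (hΦ.comp (degreeLTEquiv ℂ n).symm.injective) hS
  refine (hfin.image fun c => ((degreeLTEquiv ℤ n).symm c : ℤ[X])).subset ?_
  rintro R ⟨hdeg, hR⟩
  have hRn : R ∈ degreeLT ℤ n := mem_degreeLT.mpr hdeg
  refine ⟨degreeLTEquiv ℤ n ⟨R, hRn⟩, ?_, by simp⟩
  rw [← degreeLTEquiv_symm_comp_map (Int.castRingHom ℂ) hRn] at hR
  exact hR

end Polynomial

theorem rem_finite_general (P : Polynomial ℤ) (hP : 0 < P.natDegree)
    (B : ℝ) :
    (Rem P B).Finite := by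
  set Pc := P.map (Int.castRingHom ℂ)
  have hPc : Pc ≠ 0 :=
    (Polynomial.map_ne_zero_iff (RingHom.injective_int _)).mpr (ne_zero_of_natDegree_gt hP)
  have hdeg : P.degree = Pc.natDegree := by
    rw [← degree_eq_natDegree hPc, degree_map_eq_of_injective (RingHom.injective_int _)]
  refine (finite_setOf_degree_lt_map_intCast_mem (injective_rootJets_comp_degreeLT hPc)
    (Bornology.IsBounded.pi fun i => Metric.isBounded_closedBall (x := 0)
      (r := (i.2 : ℕ).factorial * B / |‖(i.1 : ℂ)‖ - 1| ^ ((i.2 : ℕ) + 1)))).subset ?_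
  rintro R ⟨hRdeg, hR⟩
  refine ⟨hRdeg.trans_eq hdeg, fun i _ => ?_⟩
  rw [mem_closedBall_zero_iff, rootJets_apply]
  exact hR _ ((mem_roots hPc).mp (Multiset.mem_toFinset.mp i.1.2)) _ i.2.2

/-- For a nonconstant integer polynomial `P` with no roots on the unit circle
and any real `B > 0`, the set `Rem P B` is finite. -/
theorem rem_finite (P : Polynomial ℤ) (hP : 0 < P.natDegree)
    (hcirc : ∀ z : ℂ, ‖z‖ = 1 → (Polynomial.aeval z) P ≠ 0)
    (B : ℝ) (hB : 0 < B) :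
    (Rem P B).Finite :=
  rem_finite_general P hP B
end

section
/- The polynomial Q(X) = (X^2 + X + 1)(X^3 - X + 1)(X^3 - X^2 + 1) = X^8 - X^6 + X^5 + X^4 + X^3 - X^2 + 1 divides some Littlewood polynomial. In particular, the product (X^3 - X + 1)(X^3 - X^2 + 1) divides some Littlewood polynomial. -/
open Polynomial

/-- A Littlewood polynomial: all coefficients of X^0,...,X^(deg) lie in {-1,1}. -/
def IsLittlewood (L : Polynomial ℤ) : Prop :=
  ∀ i ≤ L.natDegree, L.coeff i ∈ ({-1, 1} : Set ℤ)

noncomputable def Lw : Polynomial ℤ :=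
  -1 - X + X ^ 2 - X ^ 3 - X ^ 4 - X ^ 5 - X ^ 6 + X ^ 7 - X ^ 8 + X ^ 9 - X ^ 10
    + X ^ 11 - X ^ 12 + X ^ 13 - X ^ 14 - X ^ 15 - X ^ 16 - X ^ 17 + X ^ 18 - X ^ 19 - X ^ 20

lemma Lw_natDegree : Lw.natDegree = 20 := by
  unfold Lw; compute_degree! <;> simp [coeff_X, coeff_one]

lemma Lw_littlewood : IsLittlewood Lw := by
  intro i hi
  rw [Lw_natDegree] at hi
  interval_cases i <;>
    simp [Lw, coeff_X_pow, coeff_one, coeff_X] <;> decide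

lemma Lw_dvd : ((X ^ 2 + X + 1) * (X ^ 3 - X + 1) * (X ^ 3 - X ^ 2 + 1) : Polynomial ℤ) ∣ Lw := by
  refine ⟨-1 - X - X ^ 3 + X ^ 4 + X ^ 6 + X ^ 8 - X ^ 9 - X ^ 11 - X ^ 12, ?_⟩
  unfold Lw; ring

/-- `Q = (X^2 + X + 1)(X^3 - X + 1)(X^3 - X^2 + 1) = X^8 - X^6 + X^5 + X^4 + X^3 - X^2 + 1`
divides some Littlewood polynomial; in particular the product
`(X^3 - X + 1)(X^3 - X^2 + 1)` divides some Littlewood polynomial. -/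
theorem borwein_multiple_has_littlewood :
    ((X ^ 2 + X + 1) * (X ^ 3 - X + 1) * (X ^ 3 - X ^ 2 + 1) : Polynomial ℤ) =
      X ^ 8 - X ^ 6 + X ^ 5 + X ^ 4 + X ^ 3 - X ^ 2 + 1 ∧
    (∃ L : Polynomial ℤ, IsLittlewood L ∧
      ((X ^ 2 + X + 1) * (X ^ 3 - X + 1) * (X ^ 3 - X ^ 2 + 1) : Polynomial ℤ) ∣ L) ∧
    (∃ L : Polynomial ℤ, IsLittlewood L ∧
      ((X ^ 3 - X + 1) * (X ^ 3 - X ^ 2 + 1) : Polynomial ℤ) ∣ L) := by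
  refine ⟨by ring, ⟨Lw, Lw_littlewood, Lw_dvd⟩, ⟨Lw, Lw_littlewood, ?_⟩⟩
  exact dvd_trans ⟨X ^ 2 + X + 1, by ring⟩ Lw_dvd
end

section
/- The square (X^3 - X + 1)^2 divides some Littlewood polynomial (in fact a Littlewood polynomial of degree 195), but (X^3 - X + 1)^2 divides no Newman polynomial. -/
open Polynomial

/-- A Newman polynomial: all coefficients in {0,1} and constant term 1. -/
def IsNewman (P : Polynomial ℤ) : Prop :=
  (∀ i, P.coeff i ∈ ({0, 1} : Set ℤ)) ∧ P.coeff 0 = 1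

/-!
Write `G = (X ^ 3 - X + 1) ^ 2`. For the existence part, `G` times an explicit polynomial of
degree 21 is a Littlewood polynomial `A` of degree 27, so `A * (1 + X ^ 28 + ⋯ + X ^ 168)` is a
Littlewood polynomial of degree 195 divisible by `G`.

Suppose `N = G * Q` has coefficients `c K ∈ {0, 1}`. Long division of `N` by `G`, coefficient by
coefficient, has as state the window `(q (K - 6), …, q (K - 1))` of coefficients of `Q`, and a
carry polynomial `R_K` of degree `< 6` with `R_K(α) = c K + α R_{K+1}(α)` and
`R_K'(α) = R_{K+1}(α) + α R_{K+1}'(α)` at every root `α` of `X ^ 3 - X + 1`. At the real root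
`-ρ` (`ρ ≈ 1.3247` the plastic number) these recursions run forward from `R_0 = 0`; at the complex
roots `β`, `conj β` (`|β| ≈ 0.869`) they run backward from the zero carry beyond the degree of `N`.
Either way `R_K` and `R_K'` stay bounded at all three roots, which confines the window to a finite
set of admissible windows. A finite search shows that the windows reachable backward from `0`
never contain `(0, 0, 0, 0, 0, 1)`, the window at `K = 1` (since `q 0 = c 0 = 1`).
-/

open Finset ComplexConjugate

theorem coeff_ofFn {R : Type*} [Semiring R] [DecidableEq R] {n : ℕ} (v : Fin n → R) (i : ℕ) :
    (ofFn n v).coeff i = if h : i < n then v ⟨i, h⟩ else 0 := by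
  split_ifs with h
  · exact ofFn_coeff_eq_val_of_lt v h
  · exact ofFn_coeff_eq_zero_of_ge v (not_lt.mp h)

theorem coeff_mul_sum_X_pow_mul {R : Type*} [Semiring R] {p : R[X]} {n : ℕ}
    (hp : p.natDegree < n) (m i : ℕ) :
    (p * ∑ k ∈ range m, X ^ (n * k)).coeff i = if i < n * m then p.coeff (i % n) else 0 := by
  induction m with
  | zero => simp
  | succ m ih =>
    rw [sum_range_succ, mul_add, coeff_add, ih, coeff_mul_X_pow', Nat.mul_succ]
    by_cases h₁ : i < n * m
    · rw [if_pos h₁, if_neg (by omega), if_pos (by omega), add_zero]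
    rw [if_neg h₁, if_pos (by omega), zero_add]
    by_cases h₂ : i < n * m + n
    · rw [if_pos h₂, Nat.mod_def, Nat.div_eq_of_lt_le (k := m) (by rw [mul_comm]; omega)
        (by rw [add_mul, one_mul, mul_comm]; omega)]
    · rw [if_neg h₂]
      exact coeff_eq_zero_of_natDegree_lt (by omega)

section CarryRecursion

variable {𝕜 : Type*} [NormedField 𝕜] {α : 𝕜} {a x : ℕ → 𝕜} {C : ℝ}

theorem norm_le_of_eq_add_mul_succ_of_one_lt (hα : 1 < ‖α‖) (ha : ∀ n, ‖a n‖ ≤ C)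
    (hx₀ : x 0 = 0) (hx : ∀ n, x n = a n + α * x (n + 1)) (n : ℕ) : ‖x n‖ ≤ C / (‖α‖ - 1) := by
  have hC : 0 ≤ C := (norm_nonneg _).trans (ha 0)
  induction n with
  | zero => simpa [hx₀] using div_nonneg hC (by linarith)
  | succ n ih =>
    have h : ‖α‖ * ‖x (n + 1)‖ ≤ ‖α‖ * (C / (‖α‖ - 1)) :=
      calc ‖α‖ * ‖x (n + 1)‖ = ‖x n - a n‖ := by rw [← norm_mul, hx n]; ring_nf
        _ ≤ C / (‖α‖ - 1) + C := (norm_sub_le _ _).trans (add_le_add ih (ha n))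
        _ = ‖α‖ * (C / (‖α‖ - 1)) := by field_simp [(by linarith : ‖α‖ - 1 ≠ 0)]; ring
    exact le_of_mul_le_mul_left h (by linarith)

theorem norm_le_of_eq_add_mul_succ_of_lt_one (hα : ‖α‖ < 1) (ha : ∀ n, ‖a n‖ ≤ C) {M : ℕ}
    (hxM : ∀ n ≥ M, x n = 0) (hx : ∀ n, x n = a n + α * x (n + 1)) (n : ℕ) :
    ‖x n‖ ≤ C / (1 - ‖α‖) := by
  have hC : 0 ≤ C := (norm_nonneg _).trans (ha 0)
  suffices ∀ k n, M ≤ n + k → ‖x n‖ ≤ C / (1 - ‖α‖) from this M n (by omega)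
  intro k
  induction k with
  | zero => intro n hn; simpa [hxM n hn] using div_nonneg hC (by linarith)
  | succ k ih =>
    intro n hn
    calc ‖x n‖ ≤ ‖a n‖ + ‖α‖ * ‖x (n + 1)‖ := by rw [hx n, ← norm_mul]; exact norm_add_le _ _
      _ ≤ C + ‖α‖ * (C / (1 - ‖α‖)) := by gcongr; exacts [ha n, ih (n + 1) (by omega)]
      _ = C / (1 - ‖α‖) := by field_simp [(by linarith : 1 - ‖α‖ ≠ 0)]; ring

end CarryRecursion

theorem min_le_mul_and_mul_le_max {x l y u : ℝ} (hl : l ≤ y) (hu : y ≤ u) :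
    min (x * l) (x * u) ≤ x * y ∧ x * y ≤ max (x * l) (x * u) := by
  rcases le_total 0 x with hx | hx
  · exact ⟨min_le_of_left_le (by gcongr), le_max_of_le_right (by gcongr)⟩
  · exact ⟨min_le_of_right_le (mul_le_mul_of_nonpos_left hu hx),
      le_max_of_le_left (mul_le_mul_of_nonpos_left hl hx)⟩

namespace CubicSquare

abbrev Window := ℤ × ℤ × ℤ × ℤ × ℤ × ℤ

def lagCoeff (p : ℤ[X]) (j K : ℕ) : ℤ :=
  if j ≤ K then p.coeff (K - j) else 0

def window (p : ℤ[X]) (K : ℕ) : Window :=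
  (lagCoeff p 6 K, lagCoeff p 5 K, lagCoeff p 4 K, lagCoeff p 3 K, lagCoeff p 2 K, lagCoeff p 1 K)

def shift : Window → ℤ → Window
  | (_, t₂, t₃, t₄, t₅, t₆), s => (t₂, t₃, t₄, t₅, t₆, s)

def convCoeff : Window → ℤ → ℤ
  | (t₁, _, t₃, t₄, t₅, t₆), s => t₁ - 2 * t₃ + 2 * t₄ + t₅ - 2 * t₆ + s

def backStep : Window → ℤ → Window
  | (s₁, s₂, s₃, s₄, s₅, s₆), e => (e + 2 * s₂ - 2 * s₃ - s₄ + 2 * s₅ - s₆, s₁, s₂, s₃, s₄, s₅)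

theorem backStep_shift (t : Window) (s : ℤ) : backStep (shift t s) (convCoeff t s) = t := by
  obtain ⟨t₁, t₂, t₃, t₄, t₅, t₆⟩ := t
  simp only [shift, convCoeff, backStep, Prod.mk.injEq, and_true]
  ring

theorem window_zero (p : ℤ[X]) : window p 0 = 0 := by
  simp [window, lagCoeff]

theorem window_succ (p : ℤ[X]) (K : ℕ) : window p (K + 1) = shift (window p K) (p.coeff K) := by
  simp [window, shift, lagCoeff]

theorem window_eq_zero_of_le {p : ℤ[X]} {K : ℕ} (hK : p.natDegree + 7 ≤ K) : window p K = 0 := by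
  have h (j : ℕ) (hj : j ≤ 6) : lagCoeff p j K = 0 := by
    rw [lagCoeff, if_pos (by omega)]
    exact coeff_eq_zero_of_natDegree_lt (by omega)
  simp [window, h]

theorem coeff_sq_mul (p : ℤ[X]) (K : ℕ) :
    ((X ^ 3 - X + 1) ^ 2 * p).coeff K = convCoeff (window p K) (p.coeff K) := by
  rw [show (X ^ 3 - X + 1 : ℤ[X]) ^ 2 * p =
      X ^ 6 * p - 2 * (X ^ 4 * p) + 2 * (X ^ 3 * p) + X ^ 2 * p - 2 * (X ^ 1 * p) + p by ring]
  simp only [coeff_add, coeff_sub, coeff_ofNat_mul, coeff_X_pow_mul', window, lagCoeff, convCoeff]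

theorem backStep_window_succ (p : ℤ[X]) (K : ℕ) :
    backStep (window p (K + 1)) (((X ^ 3 - X + 1) ^ 2 * p).coeff K) = window p K := by
  rw [window_succ, coeff_sq_mul, backStep_shift]

theorem window_one (p : ℤ[X]) :
    window p 1 = (0, 0, 0, 0, 0, ((X ^ 3 - X + 1) ^ 2 * p).coeff 0) := by
  rw [window_succ, coeff_sq_mul, window_zero]
  simp [shift, convCoeff]

def evalTriple {A : Type*} [Ring A] : ℤ × ℤ × ℤ → A → A
  | (u, v, w), α => u + v * α + w * α ^ 2

/-- For the window `t` of `p` at `K` and `G = (X ^ 3 - X + 1) ^ 2`, the carry `R` of degree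
`< 6` defined by `G * ∑ i < K, p_i X ^ i = ∑ i < K, (G * p)_i X ^ i + X ^ K * R` is linear in
`t`; `carry t` is `R` reduced modulo `X ^ 3 - X + 1`, as the coefficients of `1, X, X ^ 2`.
`carryDeriv t` is `R'` reduced in the same way. -/
def carry : Window → ℤ × ℤ × ℤ
  | (t₁, t₂, t₃, t₄, t₅, t₆) => (t₁ - 2 * t₃ + t₄ + t₅ - t₆, t₂ - t₄ + t₅, t₃ - t₅ + t₆)

def carryDeriv : Window → ℤ × ℤ × ℤ
  | (_, t₂, t₃, t₄, t₅, t₆) => (t₂ - 2 * t₄ - 2 * t₅ + t₆, 2 * t₃ - t₆, 3 * t₄ - t₆)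

section Carry

variable {A : Type*} [CommRing A] {α : A}

theorem evalTriple_carry_shift (hα : α ^ 3 - α + 1 = 0) (t : Window) (s : ℤ) :
    evalTriple (carry t) α = convCoeff t s + α * evalTriple (carry (shift t s)) α := by
  obtain ⟨t₁, t₂, t₃, t₄, t₅, t₆⟩ := t
  simp only [carry, shift, convCoeff, evalTriple]
  push_cast
  linear_combination (-(t₄ - t₆ + s : A)) * hα

theorem evalTriple_carryDeriv_shift (hα : α ^ 3 - α + 1 = 0) (t : Window) (s : ℤ) :
    evalTriple (carryDeriv t) α =
      evalTriple (carry (shift t s)) α + α * evalTriple (carryDeriv (shift t s)) α := by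
  obtain ⟨t₁, t₂, t₃, t₄, t₅, t₆⟩ := t
  simp only [carry, carryDeriv, shift, evalTriple]
  push_cast
  linear_combination (-(3 * t₅ - s : A)) * hα

theorem evalTriple_carry_zero : evalTriple (carry 0) α = 0 := by
  simp [carry, evalTriple]

theorem evalTriple_carryDeriv_zero : evalTriple (carryDeriv 0) α = 0 := by
  simp [carryDeriv, evalTriple]

end Carry

section WindowBounds

variable {𝕜 : Type*} [NormedField 𝕜] {α : 𝕜} {p : ℤ[X]}

theorem norm_evalTriple_carry_le_of_one_lt (hα : α ^ 3 - α + 1 = 0) (h1 : 1 < ‖α‖)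
    (hc : ∀ K, ‖((((X ^ 3 - X + 1) ^ 2 * p).coeff K : ℤ) : 𝕜)‖ ≤ 1) (K : ℕ) :
    ‖evalTriple (carry (window p K)) α‖ ≤ 1 / (‖α‖ - 1) ∧
      ‖evalTriple (carryDeriv (window p K)) α‖ ≤ 1 / (‖α‖ - 1) / (‖α‖ - 1) := by
  have hcarry := norm_le_of_eq_add_mul_succ_of_one_lt
    (x := fun n ↦ evalTriple (carry (window p n)) α) h1 hc
    (by simp only [window_zero, evalTriple_carry_zero])
    (fun n ↦ by simp only [coeff_sq_mul, window_succ]; exact evalTriple_carry_shift hα _ _)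
  exact ⟨hcarry K, norm_le_of_eq_add_mul_succ_of_one_lt
    (x := fun n ↦ evalTriple (carryDeriv (window p n)) α) h1 (fun n ↦ hcarry (n + 1))
    (by simp only [window_zero, evalTriple_carryDeriv_zero])
    (fun n ↦ by simp only [window_succ p n]; exact evalTriple_carryDeriv_shift hα _ _) K⟩

theorem norm_evalTriple_carry_le_of_lt_one (hα : α ^ 3 - α + 1 = 0) (h1 : ‖α‖ < 1)
    (hc : ∀ K, ‖((((X ^ 3 - X + 1) ^ 2 * p).coeff K : ℤ) : 𝕜)‖ ≤ 1) (K : ℕ) :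
    ‖evalTriple (carry (window p K)) α‖ ≤ 1 / (1 - ‖α‖) ∧
      ‖evalTriple (carryDeriv (window p K)) α‖ ≤ 1 / (1 - ‖α‖) / (1 - ‖α‖) := by
  have hcarry := norm_le_of_eq_add_mul_succ_of_lt_one (M := p.natDegree + 7)
    (x := fun n ↦ evalTriple (carry (window p n)) α) h1 hc
    (fun n hn ↦ by simp only [window_eq_zero_of_le hn, evalTriple_carry_zero])
    (fun n ↦ by simp only [coeff_sq_mul, window_succ]; exact evalTriple_carry_shift hα _ _)
  exact ⟨hcarry K, norm_le_of_eq_add_mul_succ_of_lt_one (M := p.natDegree + 7)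
    (x := fun n ↦ evalTriple (carryDeriv (window p n)) α) h1 (fun n ↦ hcarry (n + 1))
    (fun n hn ↦ by simp only [window_eq_zero_of_le hn, evalTriple_carryDeriv_zero])
    (fun n ↦ by simp only [window_succ p n]; exact evalTriple_carryDeriv_shift hα _ _) K⟩

end WindowBounds

def reflectTriple : ℤ × ℤ × ℤ → ℤ × ℤ × ℤ
  | (u, v, w) => (u, -v, w)

def normTriple : ℤ × ℤ × ℤ → ℤ × ℤ × ℤ
  | (u, v, w) => (u ^ 2 + 2 * u * w - v ^ 2 + v * w + w ^ 2, u * v + w ^ 2, -u * w + v ^ 2 - w ^ 2)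

theorem evalTriple_neg {A : Type*} [CommRing A] (r : ℤ × ℤ × ℤ) (x : A) :
    evalTriple r (-x) = evalTriple (reflectTriple r) x := by
  obtain ⟨u, v, w⟩ := r
  simp only [evalTriple, reflectTriple]
  push_cast
  ring

theorem exists_plastic_root : ∃ ρ : ℝ, 1.324717 ≤ ρ ∧ ρ ≤ 1.324718 ∧ ρ ^ 3 = ρ + 1 := by
  obtain ⟨ρ, ⟨hl, hu⟩, hρ⟩ := intermediate_value_Icc (by norm_num : (1.324717 : ℝ) ≤ 1.324718)
    (f := fun x ↦ x ^ 3 - x - 1) (by fun_prop) (show (0 : ℝ) ∈ Set.Icc _ _ by norm_num)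
  exact ⟨ρ, hl, hu, by linarith [hρ]⟩

theorem exists_conj_root {ρ : ℝ} (hρ : 4 ≤ 3 * ρ ^ 2) :
    ∃ β : ℂ, β + conj β = ρ ∧ β * conj β = ρ ^ 2 - 1 := by
  obtain ⟨s, hs⟩ : ∃ s : ℝ, s ^ 2 = 3 * ρ ^ 2 - 4 := ⟨_, Real.sq_sqrt (by linarith)⟩
  refine ⟨⟨ρ / 2, s / 2⟩, ?_, ?_⟩ <;> apply Complex.ext <;> simp [sq] <;> nlinarith

section ConjugateRoots

variable {ρ : ℝ} {β : ℂ}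

theorem cube_sub_self_add_one_eq_zero_of_conj (hρ : ρ ^ 3 = ρ + 1) (hsum : β + conj β = ρ)
    (hprod : β * conj β = ρ ^ 2 - 1) : β ^ 3 - β + 1 = 0 := by
  have hρ' : (ρ : ℂ) ^ 3 = ρ + 1 := by exact_mod_cast hρ
  linear_combination (β + ρ) * β * hsum - (β + ρ) * hprod - hρ'

theorem sq_norm_of_conj (hprod : β * conj β = ρ ^ 2 - 1) : ‖β‖ ^ 2 = ρ ^ 2 - 1 := by
  have h := Complex.mul_conj' β
  rw [hprod] at h
  exact_mod_cast h.symm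

theorem sq_norm_evalTriple_of_conj (hρ : ρ ^ 3 = ρ + 1) (hsum : β + conj β = ρ)
    (hprod : β * conj β = ρ ^ 2 - 1) (r : ℤ × ℤ × ℤ) :
    ‖evalTriple r β‖ ^ 2 = evalTriple (normTriple r) ρ := by
  obtain ⟨u, v, w⟩ := r
  have hρ' : (ρ : ℂ) ^ 3 = ρ + 1 := by exact_mod_cast hρ
  apply Complex.ofReal_injective
  rw [Complex.ofReal_pow, ← Complex.mul_conj']
  simp only [evalTriple, normTriple, map_add, map_mul, map_pow, map_intCast]
  push_cast
  rw [show ((u : ℂ) + v * β + w * β ^ 2) * (u + v * conj β + w * conj β ^ 2) =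
      u ^ 2 + u * v * (β + conj β) + u * w * ((β + conj β) ^ 2 - 2 * (β * conj β)) +
        v ^ 2 * (β * conj β) + v * w * (β * conj β) * (β + conj β) + w ^ 2 * (β * conj β) ^ 2 by
    ring, hsum, hprod]
  linear_combination (v * w + w ^ 2 * ρ) * hρ'

end ConjugateRoots

/-- `10 ^ 12 * evalTriple r ρ` lies between these bounds whenever `1.324717 ≤ ρ ≤ 1.324718`. -/
def lowerEnclosure : ℤ × ℤ × ℤ → ℤ
  | (a, b, c) => a * 10 ^ 12 + 10 ^ 6 * min (b * 1324717) (b * 1324718)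
      + min (c * 1324717 ^ 2) (c * 1324718 ^ 2)

def upperEnclosure : ℤ × ℤ × ℤ → ℤ
  | (a, b, c) => a * 10 ^ 12 + 10 ^ 6 * max (b * 1324717) (b * 1324718)
      + max (c * 1324717 ^ 2) (c * 1324718 ^ 2)

/-- The enclosure of `evalTriple r ρ` meets `[-B / 1000, B / 1000]`. -/
def PlasticBounded (r : ℤ × ℤ × ℤ) (B : ℤ) : Prop :=
  lowerEnclosure r ≤ B * 10 ^ 9 ∧ -(B * 10 ^ 9) ≤ upperEnclosure r

theorem plasticBounded_of_abs_le {ρ : ℝ} (hl : 1.324717 ≤ ρ) (hu : ρ ≤ 1.324718)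
    {r : ℤ × ℤ × ℤ} {B : ℤ} (h : |evalTriple r ρ| ≤ B / 1000) : PlasticBounded r B := by
  obtain ⟨a, b, c⟩ := r
  have h₁ := min_le_mul_and_mul_le_max (x := b) (l := 1324717) (y := 10 ^ 6 * ρ) (u := 1324718)
    (by linarith) (by linarith)
  have h₂ := min_le_mul_and_mul_le_max (x := c) (l := 1324717 ^ 2) (y := (10 ^ 6 * ρ) ^ 2)
    (u := 1324718 ^ 2) (by nlinarith) (by nlinarith)
  norm_num only at h₂
  obtain ⟨h₃, h₄⟩ := abs_le.mp h
  simp only [evalTriple] at h₃ h₄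
  constructor
  · have : (lowerEnclosure (a, b, c) : ℝ) ≤ (B * 10 ^ 9 : ℤ) := by
      simp only [lowerEnclosure]
      push_cast
      linarith [h₁.1, h₂.1]
    exact_mod_cast this
  · have : ((-(B * 10 ^ 9) : ℤ) : ℝ) ≤ upperEnclosure (a, b, c) := by
      simp only [upperEnclosure]
      push_cast
      linarith [h₁.2, h₂.2]
    exact_mod_cast this

/-- The bounds, in thousandths, come from `|R(-ρ)| ≤ 1 / (ρ - 1) < 3.08`,
`|R'(-ρ)| ≤ 1 / (ρ - 1) ^ 2 < 9.485`, `‖R(β)‖ ^ 2 ≤ 1 / (1 - ‖β‖) ^ 2 < 58.3` and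
`‖R'(β)‖ ^ 2 ≤ 1 / (1 - ‖β‖) ^ 4 < 3420`. -/
def Admissible (t : Window) : Prop :=
  PlasticBounded (reflectTriple (carry t)) 3080 ∧
    PlasticBounded (reflectTriple (carryDeriv t)) 9485 ∧
    PlasticBounded (normTriple (carry t)) 58300 ∧
    PlasticBounded (normTriple (carryDeriv t)) 3420000

instance : DecidablePred Admissible := fun _ ↦ by unfold Admissible PlasticBounded; infer_instance

theorem admissible_of_bounds {ρ : ℝ} (hl : 1.324717 ≤ ρ) (hu : ρ ≤ 1.324718) (hρ : ρ ^ 3 = ρ + 1)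
    {β : ℂ} (hsum : β + conj β = ρ) (hprod : β * conj β = ρ ^ 2 - 1) {t : Window}
    (h₁ : |evalTriple (carry t) (-ρ)| ≤ 1 / (ρ - 1))
    (h₂ : |evalTriple (carryDeriv t) (-ρ)| ≤ 1 / (ρ - 1) / (ρ - 1))
    (h₃ : ‖evalTriple (carry t) β‖ ≤ 1 / (1 - ‖β‖))
    (h₄ : ‖evalTriple (carryDeriv t) β‖ ≤ 1 / (1 - ‖β‖) / (1 - ‖β‖)) : Admissible t := by
  have hβ : ‖β‖ ≤ 0.869 := by nlinarith [sq_norm_of_conj hprod, norm_nonneg β]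
  have hB₁ : 1 / (ρ - 1) ≤ 3.0797 := by rw [div_le_iff₀ (by linarith)]; linarith
  have hB₂ : 1 / (1 - ‖β‖) ≤ 7.634 := by rw [div_le_iff₀ (by linarith)]; linarith
  have hB₁' : 1 / (ρ - 1) / (ρ - 1) ≤ 3.0797 * 3.0797 := by
    rw [div_eq_mul_one_div _ (ρ - 1)]
    exact mul_le_mul hB₁ hB₁ (div_nonneg zero_le_one (by linarith)) (by norm_num)
  have hB₂' : 1 / (1 - ‖β‖) / (1 - ‖β‖) ≤ 7.634 * 7.634 := by
    rw [div_eq_mul_one_div _ (1 - ‖β‖)]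
    exact mul_le_mul hB₂ hB₂ (div_nonneg zero_le_one (by linarith)) (by norm_num)
  rw [evalTriple_neg] at h₁ h₂
  have hsq := sq_norm_evalTriple_of_conj hρ hsum hprod
  refine ⟨plasticBounded_of_abs_le hl hu ?_, plasticBounded_of_abs_le hl hu ?_,
    plasticBounded_of_abs_le hl hu ?_, plasticBounded_of_abs_le hl hu ?_⟩
  · exact h₁.trans (by norm_num at hB₁ ⊢; linarith)
  · exact h₂.trans (by norm_num at hB₁' ⊢; linarith)
  · rw [← hsq, abs_of_nonneg (sq_nonneg _)]
    exact (pow_le_pow_left₀ (norm_nonneg _) (h₃.trans hB₂) 2).trans (by norm_num)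
  · rw [← hsq, abs_of_nonneg (sq_nonneg _)]
    exact (pow_le_pow_left₀ (norm_nonneg _) (h₄.trans hB₂') 2).trans (by norm_num)

theorem admissible_window {p : ℤ[X]}
    (hc : ∀ K, ((X ^ 3 - X + 1) ^ 2 * p).coeff K ∈ ({0, 1} : Set ℤ)) (K : ℕ) :
    Admissible (window p K) := by
  obtain ⟨ρ, hl, hu, hρ⟩ := exists_plastic_root
  obtain ⟨β, hsum, hprod⟩ := exists_conj_root (ρ := ρ) (by nlinarith)
  have hnorm (𝕜 : Type) [NormedField 𝕜] (K : ℕ) :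
      ‖((((X ^ 3 - X + 1) ^ 2 * p).coeff K : ℤ) : 𝕜)‖ ≤ 1 := by
    obtain h | h : _ = 0 ∨ _ = 1 := hc K <;> simp [h]
  have hβ : ‖β‖ < 1 := by nlinarith [sq_norm_of_conj hprod, norm_nonneg β]
  have hρ' : ‖-ρ‖ = ρ := by rw [norm_neg, Real.norm_of_nonneg (by linarith)]
  obtain ⟨h₁, h₂⟩ := norm_evalTriple_carry_le_of_one_lt (α := -ρ) (by linear_combination -hρ)
    (by rw [hρ']; linarith) (hnorm ℝ) K
  obtain ⟨h₃, h₄⟩ := norm_evalTriple_carry_le_of_lt_one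
    (cube_sub_self_add_one_eq_zero_of_conj hρ hsum hprod) hβ (hnorm ℂ) K
  rw [hρ', Real.norm_eq_abs] at h₁ h₂
  exact admissible_of_bounds hl hu hρ hsum hprod h₁ h₂ h₃ h₄

/- The admissible windows reachable from `0` by backward steps with digits `0` and `1`, found by
breadth-first search. -/
set_option maxHeartbeats 4000000 in
def reachable : List Window :=
  [(-4,0,-2,1,2,3), (-4,1,-1,2,1,2), (-3,1,-1,2,1,2), (-3,1,0,2,1,1), (-3,2,-1,1,0,0),
   (-3,2,0,2,1,1), (-3,3,1,3,1,1), (-2,-1,-1,1,1,2), (-2,0,-1,0,1,1), (-2,0,-1,1,1,2),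
   (-2,0,0,3,2,3), (-2,1,-2,0,-1,1), (-2,1,-1,0,0,0), (-2,1,0,2,1,1), (-2,1,0,2,1,2),
   (-2,1,2,3,3,1), (-2,2,0,1,0,0), (-2,2,0,2,1,1), (-2,2,0,2,1,2), (-2,3,1,3,1,1),
   (-1,-2,-1,-1,1,1), (-1,-2,0,0,3,2), (-1,-1,-1,-1,1,1), (-1,-1,-1,1,1,2), (-1,-1,0,0,2,1),
   (-1,-1,1,1,2,1), (-1,0,-1,1,0,2), (-1,0,-1,1,1,2), (-1,0,0,0,1,1), (-1,0,0,2,1,2),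
   (-1,0,1,1,2,0), (-1,0,1,1,2,1), (-1,1,-2,0,-1,1), (-1,1,-1,1,-1,1), (-1,1,-1,1,0,2),
   (-1,1,0,0,0,0), (-1,1,0,2,0,1), (-1,1,0,2,1,2), (-1,1,1,2,1,1), (-1,2,0,1,0,0),
   (-1,2,0,2,0,1), (-1,2,0,2,1,2), (-1,2,1,2,1,1), (-1,3,0,1,0,0), (0,-2,-1,-1,1,1),
   (0,-2,1,0,2,1), (0,-2,1,2,3,3), (0,-1,-2,-1,-1,1), (0,-1,-1,-1,1,1), (0,-1,0,-1,1,0),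
   (0,-1,0,1,1,2), (0,-1,1,0,2,0), (0,-1,1,0,2,1), (0,-1,1,1,2,1), (0,0,-2,-1,-1,1),
   (0,0,-1,-2,-1,-1), (0,0,0,0,0,0), (0,0,0,0,1,1), (0,0,0,1,1,2), (0,0,1,0,1,-1),
   (0,0,1,1,2,1), (0,0,2,1,2,0), (0,0,3,2,3,0), (0,1,-1,0,-1,1), (0,1,-1,1,0,2),
   (0,1,0,0,0,0), (0,1,0,0,1,1), (0,1,0,1,-1,0), (0,1,0,2,1,2), (0,1,1,2,0,0),
   (0,1,1,2,1,1), (0,2,-1,0,-1,1), (0,2,0,0,0,0), (0,2,0,1,-1,0), (0,2,0,2,0,1),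
   (0,2,1,1,0,0), (0,2,1,2,0,0), (0,2,1,2,1,1), (0,3,1,1,0,0), (0,3,1,2,-1,0),
   (0,3,2,3,0,0), (0,4,2,3,0,0), (1,-3,1,0,2,1), (1,-2,0,-1,1,1), (1,-2,1,0,2,1),
   (1,-1,0,-1,1,1), (1,-1,0,0,0,1), (1,-1,1,-1,1,-1), (1,-1,1,-1,1,0), (1,-1,1,0,2,1),
   (1,-1,2,1,2,1), (1,0,-2,-1,-1,1), (1,0,-1,-2,-1,-1), (1,0,0,0,0,0), (1,0,0,0,0,1),
   (1,0,0,1,1,2), (1,0,1,-1,0,-1), (1,0,1,0,2,1), (1,0,2,0,1,-1), (1,0,2,1,1,0),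
   (1,0,2,1,2,0), (1,0,2,1,2,1), (1,0,3,1,2,-1), (1,1,-1,0,-1,1), (1,1,0,0,0,0),
   (1,1,2,0,0,-2), (1,1,2,1,1,0), (1,1,2,1,2,0), (1,1,4,2,3,0), (1,2,-1,0,-1,1),
   (1,2,0,-1,-1,-1), (1,2,0,0,-2,-1), (1,2,0,1,-1,0), (1,2,1,1,0,0), (1,2,1,2,0,0),
   (1,2,3,3,1,0), (1,3,0,0,-2,-1), (1,3,1,0,-1,-2), (1,3,1,1,0,0), (1,3,3,1,0,-2),
   (1,4,2,3,0,0), (2,-3,1,0,2,1), (2,-2,0,-1,1,1), (2,-2,1,0,2,1), (2,-1,0,-1,1,1),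
   (2,-1,1,-1,1,0), (2,-1,1,0,0,0), (2,-1,2,1,2,1), (2,0,-1,-1,-1,1), (2,0,0,-2,-1,-1),
   (2,0,0,0,0,1), (2,0,1,-1,0,-1), (2,0,1,-1,1,0), (2,0,1,0,0,0), (2,0,2,0,1,-1),
   (2,0,2,0,2,0), (2,0,2,1,1,0), (2,0,2,1,2,1), (2,1,0,-2,-1,-1), (2,1,1,-1,0,-1),
   (2,1,1,0,0,0), (2,1,2,0,0,-2), (2,1,2,0,1,-1), (2,1,2,1,1,0), (2,1,4,2,3,0),
   (2,2,0,0,-2,-1), (2,2,2,0,0,-2), (2,3,0,0,-2,-1), (2,3,3,1,0,-2), (3,-2,2,0,1,0),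
   (3,-1,2,0,1,0), (3,0,0,-2,-1,-1), (3,0,1,0,0,0), (3,0,2,-1,0,-1), (3,0,3,1,1,0),
   (3,1,0,-2,-1,-1), (3,1,0,-1,-2,-1), (3,1,1,0,0,0), (3,1,2,-1,0,-1), (3,1,3,0,0,-2),
   (3,1,3,1,1,0), (3,2,3,0,0,-2), (3,3,1,0,-2,-1), (4,-1,2,0,1,0), (4,0,2,-1,0,-1),
   (4,1,2,-1,0,-1), (4,1,3,0,0,-2), (4,1,3,1,1,0), (4,2,3,0,0,-2)]

set_option maxRecDepth 10000 in
theorem backStep_mem_reachable :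
    ∀ t ∈ reachable, ∀ e ∈ [0, 1], Admissible (backStep t e) → backStep t e ∈ reachable := by
  decide

theorem window_mem_reachable {p : ℤ[X]}
    (hc : ∀ K, ((X ^ 3 - X + 1) ^ 2 * p).coeff K ∈ ({0, 1} : Set ℤ)) (K : ℕ) :
    window p K ∈ reachable := by
  have htop : window p (K + p.natDegree + 7) ∈ reachable := by
    rw [window_eq_zero_of_le (by omega)]
    decide
  refine Nat.decreasingInduction (motive := fun k _ ↦ window p k ∈ reachable)
    (fun k _ hk ↦ ?_) htop (by omega)
  rw [← backStep_window_succ]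
  refine backStep_mem_reachable _ hk _ ?_
    (by rw [backStep_window_succ]; exact admissible_window hc k)
  obtain h | h : _ = 0 ∨ _ = 1 := hc k <;> simp [h]

noncomputable def littlewoodQuotient : ℤ[X] :=
  ofFn 22 ![1, 1, 2, 2, 1, -1, -3, -3, -2, 0, 2, 4, 4, 2, -1, -3, -4, -2, -1, 1, 1, 1]

noncomputable def littlewoodBlock : ℤ[X] :=
  (X ^ 3 - X + 1) ^ 2 * littlewoodQuotient

noncomputable def littlewoodWitness : ℤ[X] :=
  littlewoodBlock * ∑ k ∈ range 7, X ^ (28 * k)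

theorem natDegree_littlewoodBlock_lt : littlewoodBlock.natDegree < 28 := by
  have h₁ : ((X ^ 3 - X + 1 : ℤ[X]) ^ 2).natDegree ≤ 6 := by compute_degree
  have h₂ : littlewoodQuotient.natDegree < 22 := ofFn_natDegree_lt (by norm_num) _
  exact natDegree_mul_le.trans_lt (by omega)

theorem coeff_littlewoodBlock {j : ℕ} (hj : j < 28) :
    littlewoodBlock.coeff j = -1 ∨ littlewoodBlock.coeff j = 1 := by
  simp only [littlewoodBlock, coeff_sq_mul, window, lagCoeff, convCoeff, littlewoodQuotient,
    coeff_ofFn]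
  revert j
  decide

theorem coeff_littlewoodWitness (i : ℕ) :
    littlewoodWitness.coeff i = if i < 196 then littlewoodBlock.coeff (i % 28) else 0 :=
  coeff_mul_sum_X_pow_mul natDegree_littlewoodBlock_lt 7 i

theorem natDegree_littlewoodWitness : littlewoodWitness.natDegree = 195 := by
  refine natDegree_eq_of_le_of_coeff_ne_zero ?_ ?_
  · refine natDegree_le_iff_coeff_eq_zero.mpr fun i hi ↦ ?_
    rw [coeff_littlewoodWitness, if_neg (by omega)]
  · rw [coeff_littlewoodWitness, if_pos (by norm_num)]
    rcases coeff_littlewoodBlock (j := 195 % 28) (by norm_num) with h | h <;> rw [h] <;> norm_num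

theorem isLittlewood_littlewoodWitness : IsLittlewood littlewoodWitness := by
  intro i hi
  rw [natDegree_littlewoodWitness] at hi
  rw [coeff_littlewoodWitness, if_pos (by omega)]
  rcases coeff_littlewoodBlock (Nat.mod_lt i (by norm_num : 28 > 0)) with h | h <;> simp [h]

end CubicSquare

open CubicSquare

/-- `(X^3 - X + 1)^2` divides some Littlewood polynomial of degree 195, but
divides no Newman polynomial. -/
theorem square_littlewood_not_newman :
    (∃ L : Polynomial ℤ, IsLittlewood L ∧ L.natDegree = 195 ∧
      ((X ^ 3 - X + 1 : Polynomial ℤ) ^ 2) ∣ L) ∧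
    ¬ ∃ N : Polynomial ℤ, IsNewman N ∧ ((X ^ 3 - X + 1 : Polynomial ℤ) ^ 2) ∣ N := by
  refine ⟨⟨littlewoodWitness, isLittlewood_littlewoodWitness, natDegree_littlewoodWitness,
    (dvd_mul_right _ _).mul_right _⟩, ?_⟩
  rintro ⟨N, ⟨hN, hN₀⟩, Q, rfl⟩
  have h := window_mem_reachable hN 1
  rw [window_one, hN₀] at h
  exact absurd h (by decide)
end
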